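/- Define π: Sₙ → Kₙ by π(u) = u(1), where Sₙ is the Cayley graph of the symmetric group with all transpositions as generators and axial function α(u, u·(i,j)) = x_{u(i)} − x_{u(j)} for i < j, and Kₙ is the complete graph with α(i,j) = x_i − x_j. Then π is a GKM fiber bundle: it is a graph fibration whose horizontal edges at u are exactly {(u, u·(1,j)) : 2 ≤ j ≤ n}, the edge labels are preserved under lifting, and the transition maps Φ_{i,j}(u) = (i,j)·u between fibers are isomorphisms of GKM graphs with linear parts Ψ_{i,j}(x_r) = x_{(i,j)(r)}. -/

import Mathlib

open MvPolynomial Equiv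

/-! Right multiplication by a transposition `(i j)` moves `u(x₀)` exactly when `x₀ ∈ {i, j}`,
so the horizontal edges at `u` are the `u · (x₀ j)`, and `u · (x₀ j)` lies over `u j`: this
gives the unique lift of every base edge. Left multiplication by `(i j)` commutes with right
multiplication, hence preserves vertical edges, and relabels the axial function by
`x_r ↦ x_{(i j)(r)}`. -/

namespace Equiv

variable {α : Type*} [DecidableEq α]

theorem swap_eq_swap_apply_of_apply_ne {i j a : α} (h : swap i j a ≠ a) :
    swap i j = swap a (swap i j a) := by
  rcases eq_or_eq_of_swap_apply_ne_self h with rfl | rfl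
  · rw [swap_apply_left]
  · rw [swap_apply_right, swap_comm]

namespace Perm

theorem mul_swap_apply_eq_self_iff (u : Perm α) {i j : α} (hij : i ≠ j) (x₀ : α) :
    (u * swap i j) x₀ = u x₀ ↔ i ≠ x₀ ∧ j ≠ x₀ := by
  rw [mul_apply, u.injective.eq_iff, ← not_iff_not, ← Ne, swap_apply_ne_self_iff]
  grind

theorem existsUnique_mul_swap_apply_eq (u : Perm α) {x₀ k : α} (hk : k ≠ u x₀) :
    ∃! v : Perm α, (∃ i j : α, i ≠ j ∧ v = u * swap i j) ∧ v x₀ = k := by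
  have hne : x₀ ≠ u⁻¹ k := fun h => hk (eq_inv_iff_eq.1 h).symm
  refine ⟨u * swap x₀ (u⁻¹ k), ⟨⟨x₀, u⁻¹ k, hne, rfl⟩, by simp⟩, ?_⟩
  rintro _ ⟨⟨i, j, -, rfl⟩, hv⟩
  have hmoved : swap i j x₀ ≠ x₀ := fun h => hk (by rw [← hv, mul_apply, h])
  have hlift : swap i j x₀ = u⁻¹ k := eq_inv_iff_eq.2 hv
  rw [swap_eq_swap_apply_of_apply_ne hmoved, hlift]

end Perm

end Equiv

/-- The map `π : Sₙ → Kₙ`, `π(u) = u(1)` (here `0`-indexed), from the Cayley graph of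
the symmetric group with all transpositions as generators and axial function
`α(u, u·(i,j)) = x_{u(i)} − x_{u(j)}`, to the complete graph `Kₙ` with
`α(i,j) = x_i − x_j`, is a GKM fiber bundle: it is a graph fibration whose horizontal
edges at `u` are exactly the `(u, u·(1,j))`, the edge labels are preserved under
lifting, and the transition maps `Φ_{i,j}(u) = (i,j)·u` between fibers are
isomorphisms of GKM graphs with linear parts `Ψ_{i,j}(x_r) = x_{(i,j)(r)}`. -/
theorem perm_over_complete_is_gkm_bundle (n : ℕ) :
    -- the edge `(u, u·(i,j))` is vertical iff `1 ∉ {i,j}`; horizontal iff `1 ∈ {i,j}`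
    (∀ (u : Perm (Fin (n + 1))) (i j : Fin (n + 1)), i ≠ j →
      ((u * Equiv.swap i j) 0 = u 0 ↔ (i ≠ 0 ∧ j ≠ 0))) ∧
    -- graph fibration: each edge of `Kₙ` at `π u` has a unique horizontal lift at `u`
    (∀ (u : Perm (Fin (n + 1))) (k : Fin (n + 1)), k ≠ u 0 →
      ∃! v : Perm (Fin (n + 1)),
        (∃ i j : Fin (n + 1), i ≠ j ∧ v = u * Equiv.swap i j) ∧ v 0 = k) ∧
    -- the lift of the edge `(π u, k)` at `u` is `u · (1, u⁻¹ k)`, and its label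
    -- `x_{u(1)} − x_{u(u⁻¹ k)}` equals the base label `x_{π u} − x_k`
    (∀ (u : Perm (Fin (n + 1))) (k : Fin (n + 1)), k ≠ u 0 →
      (u * Equiv.swap 0 (u⁻¹ k)) 0 = k ∧
      (X (u 0) - X (u (u⁻¹ k)) : MvPolynomial (Fin (n + 1)) ℝ) = X (u 0) - X k) ∧
    -- the transition maps `Φ_{i,j}(u) = (i,j)·u` map the fiber over `i` to the fiber
    -- over `j`, are isomorphisms of graphs on the fibers, and intertwine the axial
    -- functions via `Ψ_{i,j}(x_r) = x_{(i,j)(r)}`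
    (∀ i j : Fin (n + 1), i ≠ j → ∀ u : Perm (Fin (n + 1)), u 0 = i →
      (Equiv.swap i j * u) 0 = j ∧
      (∀ a b : Fin (n + 1), a ≠ 0 → b ≠ 0 → a ≠ b →
        ((Equiv.swap i j * u * Equiv.swap a b) 0 = (Equiv.swap i j * u) 0) ∧
        (X ((Equiv.swap i j * u) a) - X ((Equiv.swap i j * u) b)
            : MvPolynomial (Fin (n + 1)) ℝ)
          = X (Equiv.swap i j (u a)) - X (Equiv.swap i j (u b)))) := by
  refine ⟨fun u i j hij => u.mul_swap_apply_eq_self_iff hij 0,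
    fun u k hk => u.existsUnique_mul_swap_apply_eq hk,
    fun u k _ => ⟨by simp, by simp⟩, fun i j _ u hu => ⟨by simp [hu], ?_⟩⟩
  intro a b ha hb hab
  exact ⟨(Perm.mul_swap_apply_eq_self_iff _ hab 0).2 ⟨ha, hb⟩, rfl⟩
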